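/- Let G be a graph on n vertices with γ(G) ≥ 3, let π be a permutation of V(G), let u_Δ be a vertex of G of maximum degree Δ(G), and let u'_Δ denote the copy of u_Δ in the second copy of G in the prism πG. Set i = |N_{πG}[u_Δ] ∩ N_{πG}[u'_Δ]| (so 0 ≤ i ≤ 2). If Δ(G) ≥ (n + γ(G) − 4 + i)/2, then γ_{(n+γ(G))/(2n)}(πG) = 2. -/

import Mathlib

/-! A vertex of the prism has one neighbour outside its own copy of `G`, so it closes over at
most `(n - 1) + 2 = n + 1 < n + γ(G)` of the `2n` vertices: no set of fewer than two vertices is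
`(n + γ(G))/(2n)`-dominating. The pair `{u, u'}` closes over
`|N[u]| + |N[u']| - i = 2 deg(u) + 4 - i ≥ n + γ(G)` vertices by the degree hypothesis. -/

open SimpleGraph

/-- Closed neighborhood of a set of vertices. -/
def closedNbhd {V : Type*} (G : SimpleGraph V) (S : Set V) : Set V :=
  {v | v ∈ S ∨ ∃ u ∈ S, G.Adj u v}

/-- `S` is a `p`-dominating set of `G`. -/
def IsPDomSet {V : Type*} [Fintype V] (G : SimpleGraph V) (p : ℝ) (S : Set V) : Prop :=
  p ≤ (closedNbhd G S).ncard / (Fintype.card V : ℝ)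

/-- The `p`-domination number of `G`. -/
noncomputable def pDomNum {V : Type*} [Fintype V] (G : SimpleGraph V) (p : ℝ) : ℕ :=
  sInf {k | ∃ S : Set V, IsPDomSet G p S ∧ S.ncard = k}

/-- `S` is a dominating set of `G`. -/
def IsDomSet {V : Type*} (G : SimpleGraph V) (S : Set V) : Prop :=
  ∀ v, v ∈ closedNbhd G S

/-- The domination number of `G`. -/
noncomputable def domNum {V : Type*} (G : SimpleGraph V) : ℕ :=
  sInf {k | ∃ S : Set V, IsDomSet G S ∧ S.ncard = k}

/-- The prism of `G` with respect to a permutation `π`. -/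
def prism {V : Type*} (G : SimpleGraph V) (π : Equiv.Perm V) : SimpleGraph (V ⊕ V) where
  Adj x y := match x, y with
    | .inl a, .inl b => G.Adj a b
    | .inr a, .inr b => G.Adj a b
    | .inl a, .inr b => π a = b
    | .inr a, .inl b => π b = a
  symm := ⟨by rintro (a|a) (b|b) h <;> simp_all [SimpleGraph.adj_comm]⟩
  loopless := ⟨by rintro (a|a) h <;> simp_all⟩

section ClosedNbhd

variable {V : Type*} (G : SimpleGraph V)

lemma closedNbhd_empty : closedNbhd G ∅ = ∅ := by
  ext v; simp [closedNbhd]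

lemma closedNbhd_singleton (a : V) : closedNbhd G {a} = insert a (G.neighborSet a) := by
  ext v; simp [closedNbhd, eq_comm]

lemma closedNbhd_union (S T : Set V) :
    closedNbhd G (S ∪ T) = closedNbhd G S ∪ closedNbhd G T := by
  ext v; simp only [closedNbhd, Set.mem_union, Set.mem_ofPred_eq]; grind

lemma closedNbhd_pair (a b : V) : closedNbhd G {a, b} = closedNbhd G {a} ∪ closedNbhd G {b} := by
  rw [Set.insert_eq, closedNbhd_union]

lemma ncard_closedNbhd_singleton [Finite V] (a : V) :
    (closedNbhd G {a}).ncard = (G.neighborSet a).ncard + 1 := by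
  rw [closedNbhd_singleton, Set.ncard_insert_of_notMem G.notMem_neighborSet_self]

lemma ncard_neighborSet_add_one_le [Finite V] (a : V) :
    (G.neighborSet a).ncard + 1 ≤ Nat.card V :=
  ncard_closedNbhd_singleton G a ▸ Set.ncard_le_card _

end ClosedNbhd

section PDomination

variable {V : Type*} [Fintype V] (G : SimpleGraph V) {p : ℝ}

lemma pDomNum_le_ncard {S : Set V} (hS : IsPDomSet G p S) : pDomNum G p ≤ S.ncard :=
  Nat.sInf_le ⟨S, hS, rfl⟩

lemma two_le_ncard_of_isPDomSet (hp : 0 < p)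
    (hsingle : ∀ a, ((closedNbhd G {a}).ncard : ℝ) < p * Fintype.card V)
    {S : Set V} (hS : IsPDomSet G p S) : 2 ≤ S.ncard := by
  by_contra! hlt
  have hcard : (0 : ℝ) < Fintype.card V := by
    by_contra! h
    have : p ≤ 0 := by simpa [IsPDomSet, le_antisymm h (Nat.cast_nonneg _)] using hS
    linarith
  obtain hS0 | hS1 : S.ncard = 0 ∨ S.ncard = 1 := by omega
  · rw [Set.ncard_eq_zero] at hS0
    subst hS0
    have : p ≤ 0 := by simpa [IsPDomSet, closedNbhd_empty] using hS
    linarith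
  · obtain ⟨a, rfl⟩ := Set.ncard_eq_one.mp hS1
    linarith [(le_div_iff₀ hcard).mp hS, hsingle a]

lemma pDomNum_eq_two (hp : 0 < p)
    (hsingle : ∀ a, ((closedNbhd G {a}).ncard : ℝ) < p * Fintype.card V)
    {a b : V} (hab : IsPDomSet G p {a, b}) : pDomNum G p = 2 := by
  have hmem : pDomNum G p ∈ {k | ∃ S : Set V, IsPDomSet G p S ∧ S.ncard = k} :=
    Nat.sInf_mem ⟨_, {a, b}, hab, rfl⟩
  obtain ⟨S, hS, hSk⟩ := hmem
  refine le_antisymm ?_ (hSk ▸ two_le_ncard_of_isPDomSet G hp hsingle hS)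
  calc pDomNum G p ≤ ({a, b} : Set V).ncard := pDomNum_le_ncard G hab
    _ ≤ ({b} : Set V).ncard + 1 := Set.ncard_insert_le a {b}
    _ = 2 := by rw [Set.ncard_singleton]

end PDomination

section Prism

variable {V : Type*} (G : SimpleGraph V) (π : Equiv.Perm V)

lemma prism_neighborSet_inl (a : V) :
    (prism G π).neighborSet (Sum.inl a) = Sum.inl '' G.neighborSet a ∪ {Sum.inr (π a)} := by
  ext (b | b) <;> simp [prism, eq_comm]

lemma prism_neighborSet_inr (a : V) :
    (prism G π).neighborSet (Sum.inr a) = Sum.inr '' G.neighborSet a ∪ {Sum.inl (π.symm a)} := by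
  ext (b | b) <;> simp [prism, Equiv.eq_symm_apply, eq_comm]

variable [Finite V]

lemma ncard_prism_neighborSet_inl (a : V) :
    ((prism G π).neighborSet (Sum.inl a)).ncard = (G.neighborSet a).ncard + 1 := by
  rw [prism_neighborSet_inl, Set.ncard_union_eq (by simp [Set.disjoint_left]),
    Set.ncard_image_of_injective _ Sum.inl_injective, Set.ncard_singleton]

lemma ncard_prism_neighborSet_inr (a : V) :
    ((prism G π).neighborSet (Sum.inr a)).ncard = (G.neighborSet a).ncard + 1 := by
  rw [prism_neighborSet_inr, Set.ncard_union_eq (by simp [Set.disjoint_left]),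
    Set.ncard_image_of_injective _ Sum.inr_injective, Set.ncard_singleton]

lemma ncard_closedNbhd_prism_singleton_le (x : V ⊕ V) :
    (closedNbhd (prism G π) {x}).ncard ≤ Nat.card V + 1 := by
  rw [ncard_closedNbhd_singleton]
  rcases x with a | a
  · rw [ncard_prism_neighborSet_inl]; linarith [ncard_neighborSet_add_one_le G a]
  · rw [ncard_prism_neighborSet_inr]; linarith [ncard_neighborSet_add_one_le G a]

lemma ncard_closedNbhd_prism_pair_add_ncard_inter (a : V) :
    (closedNbhd (prism G π) {Sum.inl a, Sum.inr a}).ncard +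
      (closedNbhd (prism G π) {Sum.inl a} ∩ closedNbhd (prism G π) {Sum.inr a}).ncard =
      2 * (G.neighborSet a).ncard + 4 := by
  rw [closedNbhd_pair, Set.ncard_union_add_ncard_inter, ncard_closedNbhd_singleton,
    ncard_closedNbhd_singleton, ncard_prism_neighborSet_inl, ncard_prism_neighborSet_inr]
  ring

end Prism

theorem stmt9_general {V : Type*} [Fintype V] (G : SimpleGraph V) (n : ℕ)
    (hn : Fintype.card V = n)
    (hγ : 3 ≤ domNum G)
    (π : Equiv.Perm V)
    (u : V)
    (i : ℕ)
    (hi : (closedNbhd (prism G π) {Sum.inl u} ∩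
            closedNbhd (prism G π) {Sum.inr u}).ncard = i)
    (hΔ : ((n : ℝ) + domNum G - 4 + i) / 2 ≤ ((G.neighborSet u).ncard : ℝ)) :
    pDomNum (prism G π) (((n : ℝ) + domNum G) / (2 * n)) = 2 := by
  have hn0 : (0 : ℝ) < n := by
    rw [← hn]; exact_mod_cast Fintype.card_pos_iff.mpr ⟨u⟩
  have hcard : (Fintype.card (V ⊕ V) : ℝ) = 2 * n := by
    rw [Fintype.card_sum, hn]; push_cast; ring
  have hγ' : (3 : ℝ) ≤ domNum G := by exact_mod_cast hγ
  refine pDomNum_eq_two _ (by positivity) (fun x => ?_) (a := Sum.inl u) (b := Sum.inr u) ?_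
  · have hx := ncard_closedNbhd_prism_singleton_le G π x
    rw [Nat.card_eq_fintype_card, hn] at hx
    have hx' : ((closedNbhd (prism G π) {x}).ncard : ℝ) ≤ n + 1 := by exact_mod_cast hx
    rw [hcard, div_mul_cancel₀ _ (by positivity)]
    linarith
  · have hpair := ncard_closedNbhd_prism_pair_add_ncard_inter G π u
    rw [hi] at hpair
    have hpair' : ((closedNbhd (prism G π) {Sum.inl u, Sum.inr u}).ncard : ℝ) + i =
        2 * (G.neighborSet u).ncard + 4 := by exact_mod_cast hpair
    rw [IsPDomSet, hcard, div_le_div_iff_of_pos_right (by positivity)]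
    linarith

theorem stmt9 {V : Type*} [Fintype V] (G : SimpleGraph V) (n : ℕ)
    (hn : Fintype.card V = n)
    (hγ : 3 ≤ domNum G)
    (π : Equiv.Perm V)
    (u : V) (hu : ∀ w : V, (G.neighborSet w).ncard ≤ (G.neighborSet u).ncard)
    (i : ℕ)
    (hi : (closedNbhd (prism G π) {Sum.inl u} ∩
            closedNbhd (prism G π) {Sum.inr u}).ncard = i)
    (hΔ : ((n : ℝ) + domNum G - 4 + i) / 2 ≤ ((G.neighborSet u).ncard : ℝ)) :
    pDomNum (prism G π) (((n : ℝ) + domNum G) / (2 * n)) = 2 :=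
  stmt9_general G n hn hγ π u i hi hΔ
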